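/- Let H be a complex Hilbert space, P : H → H an orthogonal projection with range K, and let S, T ⊆ H be subsets with S ⊆ K and T ⊆ K^⊥ whose closed linear spans satisfy span(S) + span(T) dense in H. Define ρ = sup{ |⟨x, y⟩| : x ∈ span(S), y ∈ span(T), ‖x‖ ≤ 1, ‖y‖ ≤ 1 } computed with respect to a new inner product ⟨·,·⟩_w given by a bounded positive invertible operator w (⟨x,y⟩_w = ⟨wx, y⟩). Then P extends to a bounded operator on (H, ⟨·,·⟩_w) restricted to span(S)+span(T) if and only if ρ < 1. -/

import Mathlib

open scoped InnerProductSpace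

/-- The norm induced by a positive operator `w`: `‖x‖_w = (Re⟪wx, x⟫)^{1/2}`. -/
noncomputable def wNorm {H : Type*} [NormedAddCommGroup H] [InnerProductSpace ℂ H]
    (w : H →L[ℂ] H) (x : H) : ℝ :=
  Real.sqrt (Complex.re (inner ℂ (w x) x : ℂ))

section helpers
variable {H : Type*} [NormedAddCommGroup H] [InnerProductSpace ℂ H] [CompleteSpace H]

/-- The pre-inner-product space core induced by a positive self-adjoint operator. -/
noncomputable def wCore (w : H →L[ℂ] H) (hw_sa : IsSelfAdjoint w)
    (hw_pos : ∀ x : H, 0 ≤ Complex.re (inner ℂ (w x) x : ℂ)) :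
    PreInnerProductSpace.Core ℂ H where
  inner x y := (inner ℂ (w x) y : ℂ)
  conj_inner_symm x y := (inner_conj_symm x (w y)).trans (hw_sa.isSymmetric x y).symm
  re_inner_nonneg x := hw_pos x
  add_left x y z := by simp [inner_add_left]
  smul_left x y r := by simp [inner_smul_left, mul_comm]

variable (w : H →L[ℂ] H) (hw_sa : IsSelfAdjoint w)
  (hw_pos : ∀ x : H, 0 ≤ Complex.re (inner ℂ (w x) x : ℂ))

omit [CompleteSpace H] in
lemma wNorm_nonneg (x : H) : 0 ≤ wNorm w x := Real.sqrt_nonneg _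

omit [CompleteSpace H] in
include hw_pos in
lemma wNorm_sq (x : H) : wNorm w x ^ 2 = Complex.re (inner ℂ (w x) x : ℂ) := by
  rw [wNorm, Real.sq_sqrt (hw_pos x)]

include hw_sa hw_pos in
lemma wCS (x y : H) : ‖(inner ℂ (w x) y : ℂ)‖ ≤ wNorm w x * wNorm w y := by
  have h : ‖(inner ℂ (w x) y : ℂ)‖ * ‖(inner ℂ (w y) x : ℂ)‖ ≤
      Complex.re (inner ℂ (w x) x : ℂ) * Complex.re (inner ℂ (w y) y : ℂ) :=
    @InnerProductSpace.Core.inner_mul_inner_self_le ℂ H _ _ _ (wCore w hw_sa hw_pos) x y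
  have hsymm : ‖(inner ℂ (w y) x : ℂ)‖ = ‖(inner ℂ (w x) y : ℂ)‖ := by
    have h1 : (inner ℂ (w y) x : ℂ) = inner ℂ y (w x) := hw_sa.isSymmetric y x
    rw [h1, ← inner_conj_symm, RCLike.norm_conj]
  rw [hsymm] at h
  calc ‖(inner ℂ (w x) y : ℂ)‖ = Real.sqrt (‖(inner ℂ (w x) y : ℂ)‖ * ‖(inner ℂ (w x) y : ℂ)‖) :=
        (Real.sqrt_mul_self (norm_nonneg _)).symm
    _ ≤ Real.sqrt (Complex.re (inner ℂ (w x) x : ℂ) * Complex.re (inner ℂ (w y) y : ℂ)) :=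
        Real.sqrt_le_sqrt h
    _ = wNorm w x * wNorm w y := Real.sqrt_mul (hw_pos x) _

include hw_sa hw_pos in
lemma wNorm_add_sq (x y : H) : wNorm w (x + y) ^ 2 =
    wNorm w x ^ 2 + wNorm w y ^ 2 + 2 * Complex.re (inner ℂ (w x) y : ℂ) := by
  rw [wNorm_sq w hw_pos, wNorm_sq w hw_pos, wNorm_sq w hw_pos]
  have h1 : (inner ℂ (w y) x : ℂ) = inner ℂ y (w x) := hw_sa.isSymmetric y x
  have h2 : Complex.re (inner ℂ (w y) x : ℂ) = Complex.re (inner ℂ (w x) y : ℂ) := by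
    rw [h1, ← inner_conj_symm]
    exact Complex.conj_re _
  simp only [map_add, inner_add_left, inner_add_right, Complex.add_re]
  rw [h2]; ring

omit [CompleteSpace H] in
lemma wNorm_smul (c : ℂ) (x : H) : wNorm w (c • x) = ‖c‖ * wNorm w x := by
  rw [wNorm, wNorm, map_smul, inner_smul_left, inner_smul_right, ← mul_assoc]
  have hc : (starRingEnd ℂ) c * c = ((Complex.normSq c : ℝ) : ℂ) := by
    rw [mul_comm, Complex.mul_conj]
  rw [hc, Complex.re_ofReal_mul, Real.sqrt_mul (Complex.normSq_nonneg c), ← Complex.sq_norm,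
    Real.sqrt_sq (norm_nonneg c)]

include hw_sa hw_pos in
lemma wNorm_triangle (x y : H) : wNorm w (x + y) ≤ wNorm w x + wNorm w y := by
  have h1 : wNorm w (x + y) ^ 2 ≤ (wNorm w x + wNorm w y) ^ 2 := by
    rw [wNorm_add_sq w hw_sa hw_pos]
    have h2 : Complex.re (inner ℂ (w x) y : ℂ) ≤ ‖(inner ℂ (w x) y : ℂ)‖ :=
      Complex.re_le_norm _
    have h3 := wCS w hw_sa hw_pos x y
    have h4 := h2.trans h3
    nlinarith [h4]
  exact (pow_le_pow_iff_left₀ (wNorm_nonneg w _)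
    (add_nonneg (wNorm_nonneg w x) (wNorm_nonneg w y)) two_ne_zero).mp h1

end helpers

/-- Let `P` be the orthogonal projection onto a closed subspace `K`, with
`S ⊆ K`, `T ⊆ K^⊥`, and `span S + span T` dense in `H`.  Let `w` be a bounded positive
invertible operator defining the inner product `⟪x,y⟫_w = ⟪wx,y⟫`.  Then `P` is bounded on
`span S + span T` with respect to `‖·‖_w` if and only if
`ρ = sup{|⟪x,y⟫_w| : x ∈ span S, y ∈ span T, ‖x‖_w ≤ 1, ‖y‖_w ≤ 1} < 1`. -/
theorem stmt9 {H : Type*} [NormedAddCommGroup H] [InnerProductSpace ℂ H] [CompleteSpace H]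
    (K : Submodule ℂ H) [K.HasOrthogonalProjection]
    (S T : Set H) (hS : S ⊆ (K : Set H)) (hT : T ⊆ (Kᗮ : Set H))
    (hdense : Dense ((Submodule.span ℂ S ⊔ Submodule.span ℂ T : Submodule ℂ H) : Set H))
    (w : H →L[ℂ] H) (hw_sa : IsSelfAdjoint w)
    (hw_pos : ∀ x : H, 0 ≤ Complex.re (inner ℂ (w x) x : ℂ))
    (hw_inv : IsUnit w) :
    (∃ C : ℝ, ∀ x ∈ (Submodule.span ℂ S ⊔ Submodule.span ℂ T : Submodule ℂ H),
        wNorm w ((K.subtypeL ∘L K.orthogonalProjectionOnto) x) ≤ C * wNorm w x) ↔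
    sSup {r : ℝ | ∃ x ∈ Submodule.span ℂ S, ∃ y ∈ Submodule.span ℂ T,
        wNorm w x ≤ 1 ∧ wNorm w y ≤ 1 ∧ r = ‖(inner ℂ (w x) y : ℂ)‖} < 1 := by
  set A := Submodule.span ℂ S with hA_def
  set B := Submodule.span ℂ T with hB_def
  set ρset := {r : ℝ | ∃ x ∈ A, ∃ y ∈ B,
      wNorm w x ≤ 1 ∧ wNorm w y ≤ 1 ∧ r = ‖(inner ℂ (w x) y : ℂ)‖} with hρset_def
  have hA : A ≤ K := Submodule.span_le.mpr hS
  have hB : B ≤ Kᗮ := Submodule.span_le.mpr hT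
  -- the projection acts as (x, y) ↦ x
  have hP : ∀ x ∈ A, ∀ y ∈ B, (K.subtypeL ∘L K.orthogonalProjectionOnto) (x + y) = x := by
    intro x hx y hy
    rw [ContinuousLinearMap.comp_apply, map_add,
      Submodule.orthogonalProjectionOnto_apply_of_mem_orthogonal (hB hy), add_zero]
    exact K.starProjection_eq_self_iff.mpr (hA hx)
  have hW0 : wNorm w 0 = 0 := by simp [wNorm]
  have h0mem : (0 : ℝ) ∈ ρset := by
    refine ⟨0, zero_mem A, 0, zero_mem B, ?_, ?_, ?_⟩ <;> simp [hW0]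
  have hle1 : ∀ r ∈ ρset, r ≤ 1 := by
    rintro r ⟨x, hx, y, hy, hnx, hny, rfl⟩
    calc ‖(inner ℂ (w x) y : ℂ)‖ ≤ wNorm w x * wNorm w y := wCS w hw_sa hw_pos x y
      _ ≤ 1 := mul_le_one₀ hnx (wNorm_nonneg w y) hny
  have hbdd : BddAbove ρset := ⟨1, hle1⟩
  have hρ_nonneg : (0 : ℝ) ≤ sSup ρset := le_csSup hbdd h0mem
  constructor
  · -- boundedness implies angle < 1
    rintro ⟨C₀, hC₀⟩
    set C := max C₀ 1 with hC_def
    have hC1 : (1 : ℝ) ≤ C := le_max_right _ _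
    have hC : ∀ x ∈ (A ⊔ B : Submodule ℂ H),
        wNorm w ((K.subtypeL ∘L K.orthogonalProjectionOnto) x) ≤ C * wNorm w x := by
      intro x hx
      exact (hC₀ x hx).trans (mul_le_mul_of_nonneg_right (le_max_left _ _) (wNorm_nonneg w x))
    set M := 2 * (C + 1) ^ 2 with hM_def
    have hM8 : (8 : ℝ) ≤ M := by nlinarith
    have hbound : ∀ r ∈ ρset, r ≤ 1 - 1 / M := by
      rintro r ⟨x, hx, y, hy, hnx, hny, rfl⟩
      set z := (inner ℂ (w x) y : ℂ) with hz_def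
      by_cases hz : z = 0
      · rw [hz]
        simp only [norm_zero]
        have : 1 / M ≤ 1 / 8 := by
          apply one_div_le_one_div_of_le <;> linarith
        linarith
      · set t := ‖z‖ with ht_def
        have ht_pos : 0 < t := norm_pos_iff.mpr hz
        set lam : ℂ := -((starRingEnd ℂ) z) / (t : ℂ) with hlam_def
        have htC : ((t : ℝ) : ℂ) ≠ 0 := Complex.ofReal_ne_zero.mpr ht_pos.ne'
        have hlam_abs : ‖lam‖ = 1 := by
          rw [hlam_def, norm_div, norm_neg, Complex.norm_conj, Complex.norm_real, Real.norm_eq_abs,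
            abs_of_pos ht_pos]
          exact div_self ht_pos.ne'
        have hz' : (starRingEnd ℂ) z * z = ((t ^ 2 : ℝ) : ℂ) := by
          rw [mul_comm, Complex.mul_conj]
          norm_cast
          exact (Complex.sq_norm z).symm
        have ht2 : ((t ^ 2 : ℝ) : ℂ) = (t : ℂ) * (t : ℂ) := by push_cast; ring
        have hlam_z : lam * z = (-(t : ℝ) : ℂ) := by
          rw [hlam_def, div_mul_eq_mul_div, neg_mul, hz', ht2, neg_div, mul_div_assoc,
            div_self htC, mul_one]
        set y' := lam • y with hy'_def
        have hy' : y' ∈ B := B.smul_mem lam hy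
        have hny' : wNorm w y' = wNorm w y := by
          rw [hy'_def, wNorm_smul, hlam_abs, one_mul]
        have hinner : Complex.re (inner ℂ (w x) y' : ℂ) = -t := by
          rw [hy'_def, inner_smul_right]
          rw [show (lam * (inner ℂ (w x) y : ℂ)) = (-(t : ℝ) : ℂ) from hlam_z]
          simp
        set u := x + y' with hu_def
        have hu_mem : u ∈ (A ⊔ B : Submodule ℂ H) :=
          add_mem (Submodule.mem_sup_left hx) (Submodule.mem_sup_right hy')
        have hPu : (K.subtypeL ∘L K.orthogonalProjectionOnto) u = x := hP x hx y' hy'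
        have h1 : wNorm w x ≤ C * wNorm w u := by
          have := hC u hu_mem
          rwa [hPu] at this
        have h2 : wNorm w y ≤ (C + 1) * wNorm w u := by
          have hneg : wNorm w (-x) = wNorm w x := by
            rw [show (-x : H) = (-1 : ℂ) • x by simp, wNorm_smul]
            simp
          have h5 : y' = u + (-x) := by rw [hu_def]; abel
          have htr : wNorm w y' ≤ wNorm w u + wNorm w x := by
            calc wNorm w y' = wNorm w (u + (-x)) := by rw [← h5]
              _ ≤ wNorm w u + wNorm w (-x) := wNorm_triangle w hw_sa hw_pos u (-x)
              _ = wNorm w u + wNorm w x := by rw [hneg]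
          rw [← hny']
          linarith
        have h3 : wNorm w u ^ 2 = wNorm w x ^ 2 + wNorm w y ^ 2 - 2 * t := by
          rw [hu_def, wNorm_add_sq w hw_sa hw_pos, hinner, hny']
          ring
        have hx1 : wNorm w x ^ 2 ≤ 1 := by
          calc wNorm w x ^ 2 ≤ 1 ^ 2 := pow_le_pow_left₀ (wNorm_nonneg w x) hnx 2
            _ = 1 := one_pow 2
        have hy1 : wNorm w y ^ 2 ≤ 1 := by
          calc wNorm w y ^ 2 ≤ 1 ^ 2 := pow_le_pow_left₀ (wNorm_nonneg w y) hny 2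
            _ = 1 := one_pow 2
        have h1sq : Real.sqrt (Complex.re (inner ℂ (w x) x : ℂ)) ^ 2 ≤ C ^ 2 * wNorm w u ^ 2 := by
          calc wNorm w x ^ 2 ≤ (C * wNorm w u) ^ 2 := pow_le_pow_left₀ (wNorm_nonneg w x) h1 2
            _ = C ^ 2 * wNorm w u ^ 2 := by ring
        have h1sq : wNorm w x ^ 2 ≤ C ^ 2 * wNorm w u ^ 2 := h1sq
        have h2sq : wNorm w y ^ 2 ≤ (C + 1) ^ 2 * wNorm w u ^ 2 := by
          calc wNorm w y ^ 2 ≤ ((C + 1) * wNorm w u) ^ 2 :=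
                pow_le_pow_left₀ (wNorm_nonneg w y) h2 2
            _ = (C + 1) ^ 2 * wNorm w u ^ 2 := by ring
        have hCsq : C ^ 2 ≤ (C + 1) ^ 2 := by nlinarith
        have hMpos : (0 : ℝ) < M := by linarith
        have hmono : (C ^ 2 + (C + 1) ^ 2) * wNorm w u ^ 2 ≤ M * wNorm w u ^ 2 :=
          mul_le_mul_of_nonneg_right (by rw [hM_def]; linarith) (sq_nonneg _)
        have hs : wNorm w x ^ 2 + wNorm w y ^ 2 ≤
            M * (wNorm w x ^ 2 + wNorm w y ^ 2 - 2 * t) := by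
          rw [← h3]
          linarith
        have hfin : t * M ≤ (1 - 1 / M) * M := by
          rw [sub_mul, one_mul, div_mul_cancel₀ _ hMpos.ne']
          nlinarith [hs, mul_nonneg (show (0:ℝ) ≤ M - 1 by linarith)
            (show (0:ℝ) ≤ 2 - (wNorm w x ^ 2 + wNorm w y ^ 2) by linarith)]
        exact le_of_mul_le_mul_right hfin hMpos
    have : sSup ρset ≤ 1 - 1 / M := Real.sSup_le hbound (by
      have : 1 / M ≤ 1 / 8 := by apply one_div_le_one_div_of_le <;> linarith
      linarith)
    have hMinv : 0 < 1 / M := by positivity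
    linarith
  · -- angle < 1 implies boundedness
    intro hρ
    set ρ := sSup ρset with hρ_def
    have h1ρ : 0 < 1 - ρ := by linarith
    have hkey : ∀ x ∈ A, ∀ y ∈ B,
        ‖(inner ℂ (w x) y : ℂ)‖ ≤ ρ * (wNorm w x * wNorm w y) := by
      intro x hx y hy
      by_cases hx0 : wNorm w x = 0
      · have := wCS w hw_sa hw_pos x y
        rw [hx0] at *
        simpa using this
      by_cases hy0 : wNorm w y = 0
      · have := wCS w hw_sa hw_pos x y
        rw [hy0] at *
        simpa using this
      have hxpos : 0 < wNorm w x := (wNorm_nonneg w x).lt_of_ne' hx0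
      have hypos : 0 < wNorm w y := (wNorm_nonneg w y).lt_of_ne' hy0
      set x' := (((wNorm w x)⁻¹ : ℝ) : ℂ) • x with hx'_def
      set y' := (((wNorm w y)⁻¹ : ℝ) : ℂ) • y with hy'_def
      have hnx' : wNorm w x' = 1 := by
        rw [hx'_def, wNorm_smul, Complex.norm_real, Real.norm_eq_abs, abs_of_pos (by positivity)]
        field_simp
      have hny' : wNorm w y' = 1 := by
        rw [hy'_def, wNorm_smul, Complex.norm_real, Real.norm_eq_abs, abs_of_pos (by positivity)]
        field_simp
      have hmem : ‖(inner ℂ (w x') y' : ℂ)‖ ∈ ρset :=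
        ⟨x', A.smul_mem _ hx, y', B.smul_mem _ hy, hnx'.le, hny'.le, rfl⟩
      have hle : ‖(inner ℂ (w x') y' : ℂ)‖ ≤ ρ := le_csSup hbdd hmem
      have hval : ‖(inner ℂ (w x') y' : ℂ)‖ =
          (wNorm w x)⁻¹ * (wNorm w y)⁻¹ * ‖(inner ℂ (w x) y : ℂ)‖ := by
        rw [hx'_def, hy'_def, map_smul, inner_smul_left, inner_smul_right, Complex.conj_ofReal,
          ← mul_assoc, norm_mul, norm_mul, Complex.norm_real, Complex.norm_real,
            Real.norm_eq_abs, Real.norm_eq_abs,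
          abs_of_pos (by positivity : (0:ℝ) < (wNorm w x)⁻¹),
          abs_of_pos (by positivity : (0:ℝ) < (wNorm w y)⁻¹)]
      rw [hval] at hle
      calc ‖(inner ℂ (w x) y : ℂ)‖
          = wNorm w x * wNorm w y *
            ((wNorm w x)⁻¹ * (wNorm w y)⁻¹ * ‖(inner ℂ (w x) y : ℂ)‖) := by
            field_simp
        _ ≤ wNorm w x * wNorm w y * ρ := by
            apply mul_le_mul_of_nonneg_left hle (by positivity)
        _ = ρ * (wNorm w x * wNorm w y) := by ring
    refine ⟨Real.sqrt (1 / (1 - ρ)), ?_⟩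
    intro z hz
    obtain ⟨x, hx, y, hy, rfl⟩ := Submodule.mem_sup.mp hz
    rw [hP x hx y hy]
    have hsq : (1 - ρ) * wNorm w x ^ 2 ≤ wNorm w (x + y) ^ 2 := by
      rw [wNorm_add_sq w hw_sa hw_pos]
      have hre : -‖(inner ℂ (w x) y : ℂ)‖ ≤ Complex.re (inner ℂ (w x) y : ℂ) :=
        (abs_le.1 (Complex.abs_re_le_norm _)).1
      have hk := hkey x hx y hy
      nlinarith [wNorm_nonneg w x, wNorm_nonneg w y, hρ_nonneg,
        sq_nonneg (wNorm w x - wNorm w y)]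
    have : wNorm w x ^ 2 ≤ 1 / (1 - ρ) * wNorm w (x + y) ^ 2 := by
      rw [div_mul_eq_mul_div, le_div_iff₀ h1ρ]
      nlinarith
    calc wNorm w x = Real.sqrt (wNorm w x ^ 2) := (Real.sqrt_sq (wNorm_nonneg w x)).symm
      _ ≤ Real.sqrt (1 / (1 - ρ) * wNorm w (x + y) ^ 2) := Real.sqrt_le_sqrt this
      _ = Real.sqrt (1 / (1 - ρ)) * wNorm w (x + y) := by
          rw [Real.sqrt_mul (by positivity), Real.sqrt_sq (wNorm_nonneg w _)]
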